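/- Let B be a finite Blaschke product of degree n ≥ 1. For every unimodular λ, if z_0, z_1, …, z_n are the n+1 distinct solutions on the unit circle of z B(z) = λ, then ∑_{j=0}^{n} 1/(|B'(z_j)| + 1) = 1. -/

import Mathlib

/-!
Write `q(w) = ∏ (1 - conj a_k w)`, so that `w B(w) = α w ∏ (w - a_k) / q(w)`. The polynomial
`w ∏ (w - a_k) - (λ / α) q(w)` is monic of degree `n + 1` (as `deg q ≤ n`) and vanishes at the
`n + 1` points `z_j`, hence equals `∏ (w - z_j)`. Differentiating, `(w B)'(z_j) = α / (ω_j q(z_j))`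
with `ω_j = ∏_{i ≠ j} (z_j - z_i)⁻¹` the barycentric weights. On the other hand, on the circle
`w B'(w) / B(w) = ∑ (1 - |a_k|²) / |w - a_k|² ≥ 0`, so `w B'(w) = |B'(w)| B(w)` and
`z_j (w B)'(z_j) = (|B'(z_j)| + 1) λ`. Thus `1 / (|B'(z_j)| + 1) = λ ω_j q(z_j) / (α z_j)`, and the
sum of these is the first barycentric formula for `q(0) = 1`, since `∏ (0 - z_j) = -λ / α`.
-/

open Complex ComplexConjugate Polynomial Lagrange Finset

lemma Polynomial.hasDerivAt_eval_div_eval {𝕜 : Type*} [NontriviallyNormedField 𝕜] {p q : 𝕜[X]}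
    {c x : 𝕜} (hq : q.eval x ≠ 0) (hpq : p.eval x = c * q.eval x) :
    HasDerivAt (fun w => p.eval w / q.eval w) ((p - C c * q).derivative.eval x / q.eval x) x := by
  refine ((p.hasDerivAt x).div (q.hasDerivAt x) hq).congr_deriv ?_
  rw [derivative_sub, derivative_C_mul, eval_sub, eval_mul, eval_C, hpq]
  field_simp

lemma Lagrange.eval_eq_eval_nodal_mul_sum {F ι : Type*} [Field F] [DecidableEq ι] {s : Finset ι}
    {v : ι → F} {f : F[X]} {x : F} (hvs : Set.InjOn v s) (hf : f.degree < #s)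
    (hx : ∀ i ∈ s, x ≠ v i) :
    f.eval x = (nodal s v).eval x * ∑ i ∈ s, nodalWeight s v i * (x - v i)⁻¹ * f.eval (v i) := by
  conv_lhs => rw [eq_interpolate hvs hf]
  exact eval_interpolate_not_at_node _ hx

noncomputable def blaschkeFactor (a w : ℂ) : ℂ := (w - a) / (1 - conj a * w)

lemma one_sub_conj_mul_ne_zero {a w : ℂ} (ha : ‖a‖ < 1) (hw : ‖w‖ ≤ 1) :
    1 - conj a * w ≠ 0 := by
  have hlt : ‖conj a * w‖ < 1 := by
    rw [norm_mul, RCLike.norm_conj]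
    nlinarith [norm_nonneg a, norm_nonneg w]
  intro h
  rw [← eq_of_sub_eq_zero h, norm_one] at hlt
  exact hlt.false

lemma one_sub_conj_mul_eq_mul_conj_sub {a w : ℂ} (hw : ‖w‖ = 1) :
    1 - conj a * w = w * conj (w - a) := by
  have hww : w * conj w = 1 := by
    rw [mul_conj, normSq_eq_norm_sq, hw]; norm_num
  rw [map_sub]
  linear_combination -hww

lemma norm_blaschkeFactor {a w : ℂ} (ha : ‖a‖ < 1) (hw : ‖w‖ = 1) :
    ‖blaschkeFactor a w‖ = 1 := by
  have hwa : w - a ≠ 0 := sub_ne_zero.mpr (ne_of_apply_ne norm (by rw [hw]; exact ha.ne'))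
  rw [blaschkeFactor, one_sub_conj_mul_eq_mul_conj_sub hw, norm_div, norm_mul, hw, one_mul,
    RCLike.norm_conj, div_self (norm_ne_zero_iff.mpr hwa)]

lemma hasDerivAt_blaschkeFactor {a w : ℂ} (h : 1 - conj a * w ≠ 0) :
    HasDerivAt (blaschkeFactor a) ((1 - normSq a) / (1 - conj a * w) ^ 2) w := by
  have hnum : HasDerivAt (fun u : ℂ => u - a) 1 w := (hasDerivAt_id w).sub_const a
  have hden : HasDerivAt (fun u : ℂ => 1 - conj a * u) (-conj a) w := by
    simpa using ((hasDerivAt_id w).const_mul (conj a)).const_sub 1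
  refine (hnum.div hden h).congr_deriv ?_
  rw [← mul_conj]
  ring

lemma mul_logDeriv_blaschkeFactor {a w : ℂ} (ha : ‖a‖ < 1) (hw : ‖w‖ = 1) :
    w * logDeriv (blaschkeFactor a) w = ((1 - normSq a) / normSq (w - a) : ℝ) := by
  have hden := one_sub_conj_mul_ne_zero ha hw.le
  have hwa : w - a ≠ 0 := sub_ne_zero.mpr (ne_of_apply_ne norm (by rw [hw]; exact ha.ne'))
  have hconj : conj (w - a) ≠ 0 := (_root_.map_ne_zero _).mpr hwa
  have hw0 : w ≠ 0 := norm_ne_zero_iff.mp (by rw [hw]; exact one_ne_zero)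
  rw [logDeriv_apply, (hasDerivAt_blaschkeFactor hden).deriv, blaschkeFactor]
  push_cast
  rw [← mul_conj, ← mul_conj, one_sub_conj_mul_eq_mul_conj_sub hw]
  field_simp

noncomputable def blaschkeProduct {ι : Type*} [Fintype ι] (α : ℂ) (a : ι → ℂ) (w : ℂ) : ℂ :=
  α * ∏ k, blaschkeFactor (a k) w

section BlaschkeProduct

variable {ι : Type*} [Fintype ι] {α : ℂ} {a : ι → ℂ} {w : ℂ}

lemma norm_blaschkeProduct (hα : ‖α‖ = 1) (ha : ∀ k, ‖a k‖ < 1) (hw : ‖w‖ = 1) :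
    ‖blaschkeProduct α a w‖ = 1 := by
  rw [blaschkeProduct, norm_mul, hα, one_mul, norm_prod]
  exact prod_eq_one fun k _ => norm_blaschkeFactor (ha k) hw

lemma differentiableAt_blaschkeFactor {a w : ℂ} (ha : ‖a‖ < 1) (hw : ‖w‖ ≤ 1) :
    DifferentiableAt ℂ (blaschkeFactor a) w :=
  (hasDerivAt_blaschkeFactor (one_sub_conj_mul_ne_zero ha hw)).differentiableAt

lemma differentiableAt_blaschkeProduct (ha : ∀ k, ‖a k‖ < 1) (hw : ‖w‖ ≤ 1) :
    DifferentiableAt ℂ (blaschkeProduct α a) w :=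
  (DifferentiableAt.fun_finsetProd fun k _ => differentiableAt_blaschkeFactor (ha k) hw).const_mul α

lemma mul_logDeriv_blaschkeProduct (hα : α ≠ 0) (ha : ∀ k, ‖a k‖ < 1) (hw : ‖w‖ = 1) :
    w * logDeriv (blaschkeProduct α a) w = (∑ k, (1 - normSq (a k)) / normSq (w - a k) : ℝ) := by
  have hne : ∀ k ∈ univ, blaschkeFactor (a k) w ≠ 0 := fun k _ =>
    norm_ne_zero_iff.mp (by rw [norm_blaschkeFactor (ha k) hw]; exact one_ne_zero)
  change w * logDeriv (fun u => α * ∏ k, blaschkeFactor (a k) u) w = _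
  rw [logDeriv_const_mul _ _ hα,
    logDeriv_prod hne fun k _ => differentiableAt_blaschkeFactor (ha k) hw.le, mul_sum, ofReal_sum]
  exact sum_congr rfl fun k _ => mul_logDeriv_blaschkeFactor (ha k) hw

lemma mul_deriv_blaschkeProduct (hα : ‖α‖ = 1) (ha : ∀ k, ‖a k‖ < 1) (hw : ‖w‖ = 1) :
    w * deriv (blaschkeProduct α a) w =
      ‖deriv (blaschkeProduct α a) w‖ * blaschkeProduct α a w := by
  set r : ℝ := ∑ k, (1 - normSq (a k)) / normSq (w - a k)
  have hr : 0 ≤ r := sum_nonneg fun k _ => div_nonneg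
    (by rw [normSq_eq_norm_sq]; nlinarith [ha k, norm_nonneg (a k)]) (normSq_nonneg _)
  have hB := norm_blaschkeProduct hα ha hw
  have hB0 : blaschkeProduct α a w ≠ 0 := norm_ne_zero_iff.mp (by rw [hB]; exact one_ne_zero)
  have hα0 : α ≠ 0 := norm_ne_zero_iff.mp (by rw [hα]; exact one_ne_zero)
  have hlog := mul_logDeriv_blaschkeProduct hα0 ha hw
  rw [logDeriv_apply, mul_div_assoc', div_eq_iff hB0] at hlog
  have hnorm : ‖deriv (blaschkeProduct α a) w‖ = r := by
    rw [← one_mul ‖deriv _ _‖, ← hw, ← norm_mul, hlog, norm_mul, hB, mul_one, norm_real,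
      Real.norm_of_nonneg hr]
  rw [hnorm, hlog]

lemma mul_deriv_id_mul_blaschkeProduct (hα : ‖α‖ = 1) (ha : ∀ k, ‖a k‖ < 1) (hw : ‖w‖ = 1) :
    w * deriv (fun u => u * blaschkeProduct α a u) w =
      (‖deriv (blaschkeProduct α a) w‖ + 1) * (w * blaschkeProduct α a w) := by
  rw [deriv_fun_mul differentiableAt_fun_id (differentiableAt_blaschkeProduct ha hw.le),
    deriv_id'']
  linear_combination w * mul_deriv_blaschkeProduct hα ha hw

end BlaschkeProduct

noncomputable def blaschkeDenom {ι : Type*} [Fintype ι] (a : ι → ℂ) : ℂ[X] :=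
  ∏ k, (1 - C (conj (a k)) * X)

section BlaschkeDenom

variable {ι : Type*} [Fintype ι] {a : ι → ℂ}

lemma eval_blaschkeDenom (w : ℂ) : (blaschkeDenom a).eval w = ∏ k, (1 - conj (a k) * w) := by
  simp [blaschkeDenom, eval_prod]

lemma eval_blaschkeDenom_ne_zero (ha : ∀ k, ‖a k‖ < 1) {w : ℂ} (hw : ‖w‖ ≤ 1) :
    (blaschkeDenom a).eval w ≠ 0 := by
  rw [eval_blaschkeDenom]
  exact prod_ne_zero_iff.mpr fun k _ => one_sub_conj_mul_ne_zero (ha k) hw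

lemma degree_blaschkeDenom_le : (blaschkeDenom a).degree ≤ Fintype.card ι := by
  have hfactor : ∀ k ∈ univ, (1 - C (conj (a k)) * X).natDegree ≤ 1 := fun k _ => by
    compute_degree
  refine degree_le_of_natDegree_le ((natDegree_prod_le _ _).trans ?_)
  simpa using sum_le_card_nsmul _ _ _ hfactor

lemma blaschkeProduct_eq_eval_div (α w : ℂ) :
    blaschkeProduct α a w = α * (nodal univ a).eval w / (blaschkeDenom a).eval w := by
  rw [blaschkeProduct, eval_nodal, eval_blaschkeDenom, mul_div_assoc, ← prod_div_distrib]
  rfl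

lemma eval_X_mul_nodal_eq_of_mul_blaschkeProduct_eq {α lam w : ℂ} (hα : α ≠ 0)
    (hq : (blaschkeDenom a).eval w ≠ 0) (h : w * blaschkeProduct α a w = lam) :
    (X * nodal univ a).eval w = lam / α * (blaschkeDenom a).eval w := by
  rw [← h, blaschkeProduct_eq_eval_div, eval_mul, eval_X]
  field_simp

end BlaschkeDenom

section Solutions

variable {n : ℕ} {a : Fin n → ℂ} {α lam : ℂ} {z : Fin (n + 1) → ℂ}

lemma X_mul_nodal_sub_eq_nodal (ha : ∀ k, ‖a k‖ < 1) (hα : α ≠ 0) (hzinj : Function.Injective z)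
    (hz : ∀ j, ‖z j‖ = 1 ∧ z j * blaschkeProduct α a (z j) = lam) :
    X * nodal univ a - C (lam / α) * blaschkeDenom a = nodal univ z := by
  have hmonic : (X * nodal univ a).Monic := monic_X.mul nodal_monic
  have hdeg : (X * nodal univ a).degree = ((n + 1 : ℕ) : WithBot ℕ) := by
    rw [degree_mul, degree_X, degree_nodal, card_univ, Fintype.card_fin]
    norm_cast
    omega
  have hlow : (C (lam / α) * blaschkeDenom a).degree < (X * nodal univ a).degree := by
    refine (degree_mul_le _ _).trans_lt ?_
    calc (C (lam / α)).degree + (blaschkeDenom a).degree ≤ 0 + (n : WithBot ℕ) :=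
          add_le_add degree_C_le (by simpa using degree_blaschkeDenom_le (a := a))
      _ < _ := by rw [hdeg, zero_add]; exact_mod_cast n.lt_succ_self
  refine eq_of_degree_le_of_eval_index_eq univ hzinj.injOn ?_ ?_ ?_ fun j _ => ?_
  · rw [degree_sub_eq_left_of_degree_lt hlow, hdeg, card_univ, Fintype.card_fin]
  · rw [degree_sub_eq_left_of_degree_lt hlow, hdeg, degree_nodal, card_univ, Fintype.card_fin]
  · rw [leadingCoeff_sub_of_degree_lt hlow, hmonic.leadingCoeff, nodal_monic.leadingCoeff]
  · rw [eval_nodal_at_node (mem_univ j), eval_sub, eval_C_mul,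
      eval_X_mul_nodal_eq_of_mul_blaschkeProduct_eq hα
        (eval_blaschkeDenom_ne_zero ha (hz j).1.le) (hz j).2, sub_self]

lemma deriv_id_mul_blaschkeProduct_eq (ha : ∀ k, ‖a k‖ < 1) (hα : α ≠ 0)
    (hzinj : Function.Injective z)
    (hz : ∀ j, ‖z j‖ = 1 ∧ z j * blaschkeProduct α a (z j) = lam) (j : Fin (n + 1)) :
    deriv (fun u => u * blaschkeProduct α a u) (z j) =
      α / (nodalWeight univ z j * (blaschkeDenom a).eval (z j)) := by
  have hq := eval_blaschkeDenom_ne_zero ha (hz j).1.le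
  have hfun : (fun u => u * blaschkeProduct α a u) =
      fun u => α * ((X * nodal univ a).eval u / (blaschkeDenom a).eval u) := by
    funext u
    rw [blaschkeProduct_eq_eval_div, eval_mul, eval_X]
    ring
  have hpq := eval_X_mul_nodal_eq_of_mul_blaschkeProduct_eq hα hq (hz j).2
  rw [hfun, ((hasDerivAt_eval_div_eval hq hpq).const_mul α).deriv,
    X_mul_nodal_sub_eq_nodal ha hα hzinj hz, nodalWeight_eq_eval_derivative_nodal (mem_univ j)]
  field_simp

lemma sum_nodalWeight_mul_eval_blaschkeDenom (ha : ∀ k, ‖a k‖ < 1) (hα : α ≠ 0)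
    (hzinj : Function.Injective z)
    (hz : ∀ j, ‖z j‖ = 1 ∧ z j * blaschkeProduct α a (z j) = lam) :
    -(lam / α) * ∑ j, nodalWeight univ z j * (0 - z j)⁻¹ * (blaschkeDenom a).eval (z j) = 1 := by
  have hdeg : (blaschkeDenom a).degree < #(univ : Finset (Fin (n + 1))) := by
    refine degree_blaschkeDenom_le.trans_lt ?_
    rw [card_univ, Fintype.card_fin, Fintype.card_fin]
    exact_mod_cast n.lt_succ_self
  have hz0 : ∀ j ∈ univ, (0 : ℂ) ≠ z j := fun j _ h => by simpa [← h] using (hz j).1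
  have h := eval_eq_eval_nodal_mul_sum hzinj.injOn hdeg hz0
  rw [← X_mul_nodal_sub_eq_nodal ha hα hzinj hz] at h
  simpa [eval_blaschkeDenom] using h.symm

lemma ofReal_inv_norm_deriv_add_one_eq (ha : ∀ k, ‖a k‖ < 1) (hα : ‖α‖ = 1)
    (hzinj : Function.Injective z)
    (hz : ∀ j, ‖z j‖ = 1 ∧ z j * blaschkeProduct α a (z j) = lam) (j : Fin (n + 1)) :
    ((1 / (‖deriv (blaschkeProduct α a) (z j)‖ + 1) : ℝ) : ℂ) =
      -(lam / α) * (nodalWeight univ z j * (0 - z j)⁻¹ * (blaschkeDenom a).eval (z j)) := by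
  have hα0 : α ≠ 0 := norm_ne_zero_iff.mp (by rw [hα]; exact one_ne_zero)
  have h := mul_deriv_id_mul_blaschkeProduct hα ha (hz j).1
  rw [(hz j).2, deriv_id_mul_blaschkeProduct_eq ha hα0 hzinj hz] at h
  have hq := eval_blaschkeDenom_ne_zero ha (hz j).1.le
  have hw := nodalWeight_ne_zero hzinj.injOn (mem_univ j)
  have hz0 : z j ≠ 0 := norm_ne_zero_iff.mp (by rw [(hz j).1]; exact one_ne_zero)
  have hd : (‖deriv (blaschkeProduct α a) (z j)‖ : ℂ) + 1 ≠ 0 := by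
    exact_mod_cast (by positivity : ‖deriv (blaschkeProduct α a) (z j)‖ + 1 ≠ 0)
  push_cast
  field_simp
  field_simp at h
  linear_combination -h

end Solutions

theorem sum_inv_deriv_add_one_general (n : ℕ) (a : Fin n → ℂ)
    (ha : ∀ k, ‖a k‖ < 1) (α : ℂ) (hα : ‖α‖ = 1)
    (B : ℂ → ℂ)
    (hB : ∀ w, B w = α * ∏ k, (w - a k) / (1 - (starRingEnd ℂ) (a k) * w))
    (lam : ℂ)
    (z : Fin (n + 1) → ℂ) (hzinj : Function.Injective z)
    (hz : ∀ j, ‖z j‖ = 1 ∧ z j * B (z j) = lam) :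
    ∑ j, 1 / (‖deriv B (z j)‖ + 1) = 1 := by
  obtain rfl : B = blaschkeProduct α a := funext hB
  have hα0 : α ≠ 0 := norm_ne_zero_iff.mp (by rw [hα]; exact one_ne_zero)
  have hsum : ((∑ j, 1 / (‖deriv (blaschkeProduct α a) (z j)‖ + 1) : ℝ) : ℂ) = 1 := by
    rw [ofReal_sum, sum_congr rfl fun j _ => ofReal_inv_norm_deriv_add_one_eq ha hα hzinj hz j,
      ← mul_sum, sum_nodalWeight_mul_eval_blaschkeDenom ha hα0 hzinj hz]
  exact_mod_cast hsum

/-- For a Blaschke product `B` of degree `n ≥ 1` and unimodular `λ`, if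
`z 0, …, z n` are the `n+1` distinct unimodular solutions of `z B(z) = λ`, then
`∑ j, 1/(|B'(z j)| + 1) = 1`. -/
theorem sum_inv_deriv_add_one (n : ℕ) (hn : 1 ≤ n) (a : Fin n → ℂ)
    (ha : ∀ k, ‖a k‖ < 1) (α : ℂ) (hα : ‖α‖ = 1)
    (B : ℂ → ℂ)
    (hB : ∀ w, B w = α * ∏ k, (w - a k) / (1 - (starRingEnd ℂ) (a k) * w))
    (lam : ℂ) (hlam : ‖lam‖ = 1)
    (z : Fin (n + 1) → ℂ) (hzinj : Function.Injective z)
    (hz : ∀ j, ‖z j‖ = 1 ∧ z j * B (z j) = lam)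
    (hzall : ∀ w : ℂ, ‖w‖ = 1 → w * B w = lam → ∃ j, w = z j) :
    ∑ j, 1 / (‖deriv B (z j)‖ + 1) = 1 :=
  sum_inv_deriv_add_one_general n a ha α hα B hB lam z hzinj hz
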